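/- Helstrom–Holevo: for a prior p ∈ [0,1] and density matrices ρ₀, ρ₁, the minimum average error probability of binary discrimination equals min_{0≤Λ≤I} ( p Tr(Λρ₀) + (1−p) Tr((I−Λ)ρ₁) ) = (1/2)(1 − ‖pρ₀ − (1−p)ρ₁‖₁), where ‖·‖₁ is the trace norm. -/

import Mathlib

open Matrix
open scoped ComplexOrder

/-- The trace norm `‖A‖₁ = Tr √(AᴴA)`. -/
noncomputable def traceNorm {d : Type*} [Fintype d] [DecidableEq d]
    (A : Matrix d d ℂ) : ℝ :=
  ((Matrix.posSemidef_conjTranspose_mul_self A).1.eigenvectorUnitary.1 *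
    diagonal (((↑) : ℝ → ℂ) ∘ (√·) ∘ (Matrix.posSemidef_conjTranspose_mul_self A).1.eigenvalues) *
    (star (Matrix.posSemidef_conjTranspose_mul_self A).1.eigenvectorUnitary : Matrix d d ℂ)).trace.re

/-- Minimum average error probability of binary state discrimination with prior `(p, 1−p)`. -/
noncomputable def perr {d : ℕ} (p : ℝ) (ρ₀ ρ₁ : Matrix (Fin d) (Fin d) ℂ) : ℝ :=
  sInf {x : ℝ | ∃ Λ : Matrix (Fin d) (Fin d) ℂ, Λ.PosSemidef ∧ (1 - Λ).PosSemidef ∧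
    x = p * ((Λ * ρ₀).trace).re + (1 - p) * (((1 - Λ) * ρ₁).trace).re}

/-! With `Δ = p ρ₀ - (1 - p) ρ₁`, the error of the test `Λ` is `(1 - p) + Re Tr (Λ Δ)`. In an
eigenbasis `U` of `Δ`, `Tr (Λ Δ) = ∑ cᵢ μᵢ` where the `cᵢ ∈ [0, 1]` are the diagonal entries of
`U* Λ U`, so it is at least the sum of the negative eigenvalues of `Δ`, with equality when `Λ` is
the spectral projection onto the negative part of `Δ`. That sum is
`(Tr Δ - ‖Δ‖₁) / 2 = (2p - 1 - ‖Δ‖₁) / 2`. -/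

lemma min_zero_le_mul {c x : ℝ} (hc : c ∈ Set.Icc 0 1) : min x 0 ≤ c * x := by
  rcases le_total x 0 with hx | hx
  · rw [min_eq_left hx]; nlinarith [hc.2]
  · rw [min_eq_right hx]; exact mul_nonneg hc.1 hx

variable {n : Type*} [DecidableEq n]

lemma Matrix.PosSemidef.re_diag_mem_Icc {B : Matrix n n ℂ} (h₀ : B.PosSemidef)
    (h₁ : (1 - B).PosSemidef) (i : n) : (B i i).re ∈ Set.Icc 0 1 := by
  have hle : (0 : ℂ) ≤ 1 - B i i := by simpa using h₁.diag_nonneg (i := i)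
  exact ⟨(Complex.le_def.mp h₀.diag_nonneg).1, by simpa using (Complex.le_def.mp hle).1⟩

variable [Fintype n]

lemma traceNorm_eq_re_trace_cfc_sqrt (A : Matrix n n ℂ) :
    traceNorm A = (cfc Real.sqrt (Aᴴ * A)).trace.re := by
  rw [(posSemidef_conjTranspose_mul_self A).1.cfc_eq]
  rfl

namespace Matrix.IsHermitian
variable {A : Matrix n n ℂ}

lemma trace_cfc (hA : A.IsHermitian) (f : ℝ → ℝ) :
    (hA.cfc f).trace = ∑ i, (f (hA.eigenvalues i) : ℂ) := by
  rw [IsHermitian.cfc, Unitary.conjStarAlgAut_apply, trace_mul_cycle, Unitary.coe_star_mul_self,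
    one_mul, trace_diagonal]
  rfl

lemma traceNorm_eq_sum_abs_eigenvalues (hA : A.IsHermitian) :
    traceNorm A = ∑ i, |hA.eigenvalues i| := by
  have habs : cfc Real.sqrt (Aᴴ * A) = cfc (fun t : ℝ => |t|) A := by
    rw [hA.eq, ← sq, ← cfc_pow_id (R := ℝ) A 2 hA.isSelfAdjoint, ← cfc_comp' Real.sqrt (· ^ 2) A]
    simp only [Real.sqrt_sq_eq_abs]
  rw [traceNorm_eq_re_trace_cfc_sqrt, habs, hA.cfc_eq, trace_cfc, Complex.re_sum]
  simp only [Complex.ofReal_re]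

lemma re_trace_mul_eq_sum (hA : A.IsHermitian) (Λ : Matrix n n ℂ) :
    (Λ * A).trace.re = ∑ i, ((star (hA.eigenvectorUnitary : Matrix n n ℂ) * Λ *
      hA.eigenvectorUnitary) i i).re * hA.eigenvalues i := by
  conv_lhs => rw [hA.spectral_theorem, Unitary.conjStarAlgAut_apply, ← mul_assoc, ← mul_assoc,
    trace_mul_cycle, ← mul_assoc]
  simp [trace, mul_diagonal, Complex.re_sum]

lemma sum_min_zero_le_re_trace_mul (hA : A.IsHermitian) {Λ : Matrix n n ℂ}
    (h₀ : Λ.PosSemidef) (h₁ : (1 - Λ).PosSemidef) :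
    ∑ i, min (hA.eigenvalues i) 0 ≤ (Λ * A).trace.re := by
  set U : Matrix n n ℂ := (hA.eigenvectorUnitary : Matrix n n ℂ)
  have hU₀ : (star U * Λ * U).PosSemidef := h₀.conjTranspose_mul_mul_same U
  have hU₁ : (1 - star U * Λ * U).PosSemidef := by
    have := h₁.conjTranspose_mul_mul_same U
    rwa [Matrix.mul_sub, Matrix.sub_mul, Matrix.mul_one, ← star_eq_conjTranspose,
      Unitary.coe_star_mul_self] at this
  rw [hA.re_trace_mul_eq_sum]
  exact Finset.sum_le_sum fun i _ => min_zero_le_mul (hU₀.re_diag_mem_Icc hU₁ i)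

lemma sum_min_eigenvalues_zero (hA : A.IsHermitian) :
    ∑ i, min (hA.eigenvalues i) 0 = (A.trace.re - traceNorm A) / 2 := by
  rw [hA.traceNorm_eq_sum_abs_eigenvalues, hA.trace_eq_sum_eigenvalues, Complex.re_sum,
    ← Finset.sum_sub_distrib, Finset.sum_div]
  refine Finset.sum_congr rfl fun i _ => ?_
  simp only [← RCLike.re_to_complex, RCLike.ofReal_re]
  rcases le_total (hA.eigenvalues i) 0 with h | h
  · rw [min_eq_left h, abs_of_nonpos h]; ring
  · rw [min_eq_right h, abs_of_nonneg h]; ring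

open scoped MatrixOrder in
lemma isLeast_re_trace_mul (hA : A.IsHermitian) :
    IsLeast {x : ℝ | ∃ Λ : Matrix n n ℂ, Λ.PosSemidef ∧ (1 - Λ).PosSemidef ∧
      x = (Λ * A).trace.re} ((A.trace.re - traceNorm A) / 2) := by
  rw [← hA.sum_min_eigenvalues_zero]
  refine ⟨⟨cfc (fun t : ℝ => if t < 0 then 1 else 0) A, ?_, ?_, ?_⟩, ?_⟩
  · exact (cfc_nonneg fun t _ => by split_ifs <;> norm_num).posSemidef
  · exact le_iff.mp (cfc_le_one _ A fun t _ => by split_ifs <;> norm_num)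
  · have hmul : cfc (fun t : ℝ => if t < 0 then 1 else 0) A * A =
        cfc (fun t : ℝ => min t 0) A := calc
      _ = cfc (fun t : ℝ => if t < 0 then 1 else 0) A * cfc (fun t : ℝ => t) A := by
        rw [cfc_id' ℝ A]
      _ = cfc (fun t : ℝ => (if t < 0 then 1 else 0) * t) A :=
        (cfc_mul _ _ A (A.finite_real_spectrum.continuousOn _)).symm
      _ = cfc (fun t : ℝ => min t 0) A := by
        congr 1
        funext t
        split_ifs with ht
        · simp [ht.le]
        · simp [le_of_not_gt ht]
    rw [hmul, hA.cfc_eq, trace_cfc, Complex.re_sum]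
    simp only [Complex.ofReal_re]
  · rintro x ⟨Λ, h₀, h₁, rfl⟩
    exact hA.sum_min_zero_le_re_trace_mul h₀ h₁

end Matrix.IsHermitian

lemma error_eq_re_trace_mul_sub_add {n : Type*} [Fintype n] [DecidableEq n] (p : ℝ)
    (Λ ρ₀ ρ₁ : Matrix n n ℂ) (h₁t : ρ₁.trace = 1) :
    p * ((Λ * ρ₀).trace).re + (1 - p) * (((1 - Λ) * ρ₁).trace).re =
      (Λ * (p • ρ₀ - (1 - p) • ρ₁)).trace.re + (1 - p) := by
  simp only [Matrix.mul_sub, Matrix.sub_mul, Matrix.mul_smul, Matrix.one_mul, trace_sub,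
    trace_smul, h₁t, Complex.sub_re, Complex.one_re, Complex.real_smul, Complex.re_ofReal_mul]
  ring

theorem helstrom_holevo_general {d : ℕ} (p : ℝ)
    (ρ₀ ρ₁ : Matrix (Fin d) (Fin d) ℂ)
    (h₀ : ρ₀.PosSemidef) (h₀t : ρ₀.trace = 1)
    (h₁ : ρ₁.PosSemidef) (h₁t : ρ₁.trace = 1) :
    perr p ρ₀ ρ₁ = (1 / 2) * (1 - traceNorm (p • ρ₀ - (1 - p) • ρ₁)) := by
  set Δ := p • ρ₀ - (1 - p) • ρ₁
  have hΔ : Δ.IsHermitian :=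
    (h₀.1.smul (IsSelfAdjoint.all p)).sub (h₁.1.smul (IsSelfAdjoint.all (1 - p)))
  have htr : Δ.trace.re = 2 * p - 1 := by
    simp only [Δ, trace_sub, trace_smul, h₀t, h₁t, Complex.sub_re, Complex.real_smul,
      Complex.re_ofReal_mul, Complex.one_re]
    ring
  have hset : {x : ℝ | ∃ Λ : Matrix (Fin d) (Fin d) ℂ, Λ.PosSemidef ∧ (1 - Λ).PosSemidef ∧
      x = p * ((Λ * ρ₀).trace).re + (1 - p) * (((1 - Λ) * ρ₁).trace).re} =
      (· + (1 - p)) '' {x : ℝ | ∃ Λ : Matrix (Fin d) (Fin d) ℂ, Λ.PosSemidef ∧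
        (1 - Λ).PosSemidef ∧ x = (Λ * Δ).trace.re} := by
    ext x
    simp only [Set.mem_ofPred_eq, Set.mem_image, error_eq_re_trace_mul_sub_add p _ ρ₀ ρ₁ h₁t]
    aesop
  have hmono : Monotone (· + (1 - p)) := fun _ _ h => add_le_add_left h _
  rw [perr, hset, (hmono.map_isLeast hΔ.isLeast_re_trace_mul).csInf_eq, htr]
  ring

/-- Helstrom–Holevo theorem:
`min_{0≤Λ≤I} ( p Tr(Λρ₀) + (1−p) Tr((I−Λ)ρ₁) ) = (1/2)(1 − ‖pρ₀ − (1−p)ρ₁‖₁)`. -/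
theorem helstrom_holevo {d : ℕ} (p : ℝ) (hp0 : 0 ≤ p) (hp1 : p ≤ 1)
    (ρ₀ ρ₁ : Matrix (Fin d) (Fin d) ℂ)
    (h₀ : ρ₀.PosSemidef) (h₀t : ρ₀.trace = 1)
    (h₁ : ρ₁.PosSemidef) (h₁t : ρ₁.trace = 1) :
    perr p ρ₀ ρ₁ = (1 / 2) * (1 - traceNorm (p • ρ₀ - (1 - p) • ρ₁)) :=
  helstrom_holevo_general p ρ₀ ρ₁ h₀ h₀t h₁ h₁t
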